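/- Let I be a countable set, d : I → ℕ with d(σ) ≥ 1, γ : I → [0,∞), t > s > 0, α = 2t/(s+t). Assume K := ∑_{σ∈I} d(σ)³(1+γ(σ)²)^{−t} < ∞. Let E be a Banach space, and for each σ ∈ I let c(σ,i,j) ∈ E for 1 ≤ i,j ≤ d(σ). If M := (∑_σ d(σ)(1+γ(σ)²)^s ∑_{i,j} ‖c(σ,i,j)‖_E²)^{1/2} < ∞, then (∑_σ d(σ) ∑_{i,j} ‖c(σ,i,j)‖_E^α)^{1/α} ≤ K^{s/(2t)} · M. -/

import Mathlib

/-!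
Put p = (s + t)/t and q = (s + t)/s, so that 1/p + 1/q = 1 and α = 2/p. Each term of the
left-hand sum factors as
  d ‖c‖^α = (d (1 + γ²)^s ‖c‖²)^(1/p) · (d (1 + γ²)^(-t))^(1/q),
the powers of 1 + γ² cancelling because s/p = t/q. Hölder's inequality over all triples (σ, i, j)
bounds the sum by M^(2/p) K^(1/q), since summing d (1 + γ²)^(-t) over the d² pairs (i, j) gives
the term d³ (1 + γ²)^(-t) of K. Raising to the power 1/α gives the claim.
-/

open scoped ENNReal BigOperators

open MeasureTheory in
theorem ENNReal.tsum_mul_le_Lp_mul_Lq {ι : Type*} {p q : ℝ} (hpq : p.HolderConjugate q)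
    (f g : ι → ℝ≥0∞) :
    ∑' i, f i * g i ≤ (∑' i, f i ^ p) ^ (1 / p) * (∑' i, g i ^ q) ^ (1 / q) := by
  let _ : MeasurableSpace ι := ⊤
  have hmeas : ∀ h : ι → ℝ≥0∞, AEMeasurable h Measure.count :=
    fun _ => (Measurable.of_comap_le le_top).aemeasurable
  simpa [lintegral_count] using
    ENNReal.lintegral_mul_le_Lp_mul_Lq Measure.count hpq (hmeas f) (hmeas g)

theorem ENNReal.tsum_rpow_mul_rpow_le {ι : Type*} {a b : ℝ} (ha : 0 < a) (hb : 0 < b)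
    (hab : a + b = 1) (f g : ι → ℝ≥0∞) :
    ∑' i, f i ^ a * g i ^ b ≤ (∑' i, f i) ^ a * (∑' i, g i) ^ b := by
  simpa [← ENNReal.rpow_mul, ha.ne', hb.ne'] using
    ENNReal.tsum_mul_le_Lp_mul_Lq (Real.HolderConjugate.inv_inv ha hb hab)
      (fun i => f i ^ a) (fun i => g i ^ b)

theorem ENNReal.tsum_sigma_fin_prod {I : Type*} (d : I → ℕ)
    (F : (Σ σ, Fin (d σ) × Fin (d σ)) → ℝ≥0∞) :
    ∑' z, F z = ∑' σ, ∑ i, ∑ j, F ⟨σ, i, j⟩ := by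
  simp only [ENNReal.tsum_sigma', tsum_fintype, Fintype.sum_prod_type]

theorem mul_ofReal_rpow_eq_rpow_mul_rpow (n : ℝ≥0∞) {w x s t a b : ℝ} (hw : 0 < w)
    (hx : 0 ≤ x) (ha : 0 ≤ a) (hb : 0 ≤ b) (hab : a + b = 1) (hbal : s * a = t * b) :
    n * ENNReal.ofReal (x ^ (2 * a)) =
      (n * ENNReal.ofReal (w ^ s) * ENNReal.ofReal (x ^ 2)) ^ a
        * (n * ENNReal.ofReal (w ^ (-t))) ^ b := by
  set W := ENNReal.ofReal w
  have hW0 : W ≠ 0 := by simpa [W] using hw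
  have hn : n = n ^ a * n ^ b := by
    rw [← ENNReal.rpow_add_of_nonneg _ _ ha hb, hab, ENNReal.rpow_one]
  have hweights : (W ^ s) ^ a * (W ^ (-t)) ^ b = 1 := by
    rw [← ENNReal.rpow_mul, ← ENNReal.rpow_mul, ← ENNReal.rpow_add _ _ hW0 ENNReal.ofReal_ne_top,
      show s * a + -t * b = 0 by linarith, ENNReal.rpow_zero]
  have hx2 : ENNReal.ofReal (x ^ (2 * a)) = ENNReal.ofReal (x ^ 2) ^ a := by
    rw [ENNReal.ofReal_rpow_of_nonneg (by positivity) ha, ← Real.rpow_natCast,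
      ← Real.rpow_mul hx, Nat.cast_ofNat]
  rw [← ENNReal.ofReal_rpow_of_pos hw, ← ENNReal.ofReal_rpow_of_pos hw,
    ENNReal.mul_rpow_of_nonneg _ _ ha, ENNReal.mul_rpow_of_nonneg _ _ ha,
    ENNReal.mul_rpow_of_nonneg _ _ hb, hx2]
  calc n * ENNReal.ofReal (x ^ 2) ^ a
      = n ^ a * n ^ b * ((W ^ s) ^ a * (W ^ (-t)) ^ b) * ENNReal.ofReal (x ^ 2) ^ a := by
        rw [hweights, mul_one, ← hn]
    _ = _ := by ring

theorem salpha_bound_general {I : Type*}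
    (d : I → ℕ) (γ : I → ℝ)
    (s t : ℝ) (hs : 0 < s) (hst : s < t)
    {E : Type*} [NormedAddCommGroup E]
    (c : (σ : I) → Fin (d σ) → Fin (d σ) → E) :
    (∑' σ, (d σ : ℝ≥0∞) * ∑ i, ∑ j, ENNReal.ofReal (‖c σ i j‖ ^ (2 * t / (s + t))))
        ^ ((s + t) / (2 * t))
      ≤ (∑' σ, (d σ : ℝ≥0∞) ^ 3 * ENNReal.ofReal ((1 + γ σ ^ 2) ^ (-t))) ^ (s / (2 * t))
        * (∑' σ, (d σ : ℝ≥0∞) * ENNReal.ofReal ((1 + γ σ ^ 2) ^ s)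
            * ∑ i, ∑ j, ENNReal.ofReal (‖c σ i j‖ ^ 2)) ^ ((1 : ℝ) / 2) := by
  have ht : 0 < t := hs.trans hst
  have hab : t / (s + t) + s / (s + t) = 1 := by field_simp; ring
  have hbal : s * (t / (s + t)) = t * (s / (s + t)) := by ring
  let f (z : Σ σ, Fin (d σ) × Fin (d σ)) : ℝ≥0∞ :=
    d z.1 * ENNReal.ofReal ((1 + γ z.1 ^ 2) ^ s) * ENNReal.ofReal (‖c z.1 z.2.1 z.2.2‖ ^ 2)
  let g (z : Σ σ, Fin (d σ) × Fin (d σ)) : ℝ≥0∞ :=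
    d z.1 * ENNReal.ofReal ((1 + γ z.1 ^ 2) ^ (-t))
  have hfg : ∑' σ, (d σ : ℝ≥0∞) * ∑ i, ∑ j, ENNReal.ofReal (‖c σ i j‖ ^ (2 * t / (s + t)))
      = ∑' z, f z ^ (t / (s + t)) * g z ^ (s / (s + t)) := by
    simp only [ENNReal.tsum_sigma_fin_prod, Finset.mul_sum, mul_div_assoc, f, g]
    refine tsum_congr fun σ => Finset.sum_congr rfl fun i _ => Finset.sum_congr rfl fun j _ => ?_
    exact mul_ofReal_rpow_eq_rpow_mul_rpow _ (by positivity) (norm_nonneg _) (by positivity)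
      (by positivity) hab hbal
  have hf : ∑' z, f z = ∑' σ, (d σ : ℝ≥0∞) * ENNReal.ofReal ((1 + γ σ ^ 2) ^ s)
      * ∑ i, ∑ j, ENNReal.ofReal (‖c σ i j‖ ^ 2) := by
    simp only [ENNReal.tsum_sigma_fin_prod, Finset.mul_sum, f]
  have hg : ∑' z, g z = ∑' σ, (d σ : ℝ≥0∞) ^ 3 * ENNReal.ofReal ((1 + γ σ ^ 2) ^ (-t)) := by
    simp only [ENNReal.tsum_sigma_fin_prod, Finset.sum_const, Finset.card_univ, Fintype.card_fin,
      nsmul_eq_mul, g]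
    ring_nf
  have hexp : 0 ≤ (s + t) / (2 * t) := by positivity
  calc _ = (∑' z, f z ^ (t / (s + t)) * g z ^ (s / (s + t))) ^ ((s + t) / (2 * t)) := by rw [hfg]
    _ ≤ ((∑' z, f z) ^ (t / (s + t)) * (∑' z, g z) ^ (s / (s + t))) ^ ((s + t) / (2 * t)) :=
        ENNReal.rpow_le_rpow (ENNReal.tsum_rpow_mul_rpow_le (by positivity) (by positivity) hab f g)
          hexp
    _ = _ := by
        rw [ENNReal.mul_rpow_of_nonneg _ _ hexp, ← ENNReal.rpow_mul, ← ENNReal.rpow_mul, hf, hg,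
          mul_comm]
        congr 2 <;> field_simp

theorem salpha_bound {I : Type*} [Countable I]
    (d : I → ℕ) (hd : ∀ σ, 1 ≤ d σ) (γ : I → ℝ)
    (s t : ℝ) (hs : 0 < s) (hst : s < t)
    {E : Type*} [NormedAddCommGroup E] [NormedSpace ℂ E] [CompleteSpace E]
    (c : (σ : I) → Fin (d σ) → Fin (d σ) → E)
    (hK : (∑' σ, (d σ : ℝ≥0∞) ^ 3 * ENNReal.ofReal ((1 + γ σ ^ 2) ^ (-t))) ≠ ⊤)
    (hM : (∑' σ, (d σ : ℝ≥0∞) * ENNReal.ofReal ((1 + γ σ ^ 2) ^ s)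
        * ∑ i, ∑ j, ENNReal.ofReal (‖c σ i j‖ ^ 2)) ≠ ⊤) :
    (∑' σ, (d σ : ℝ≥0∞) * ∑ i, ∑ j, ENNReal.ofReal (‖c σ i j‖ ^ (2 * t / (s + t))))
        ^ ((s + t) / (2 * t))
      ≤ (∑' σ, (d σ : ℝ≥0∞) ^ 3 * ENNReal.ofReal ((1 + γ σ ^ 2) ^ (-t))) ^ (s / (2 * t))
        * (∑' σ, (d σ : ℝ≥0∞) * ENNReal.ofReal ((1 + γ σ ^ 2) ^ s)
            * ∑ i, ∑ j, ENNReal.ofReal (‖c σ i j‖ ^ 2)) ^ ((1 : ℝ) / 2) :=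
  salpha_bound_general d γ s t hs hst c
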